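/- Let C be a cartesian category and G an internal group such that G* : C → [G, C] has a left adjoint Σ_G and the adjunction Σ_G ⊣ G* satisfies Frobenius reciprocity. Let L ⊣ R : C ⇄ [G, C] be an adjunction over C (i.e. Σ_G ∘ L = Id_C) which satisfies Frobenius reciprocity, and write (P, p) for the G-object L(1). Then R(G, m) ≅ P, and the morphism (p, π₂) : G × P → P × P of C is an isomorphism. -/

import Mathlib

open CategoryTheory CategoryTheory.Limits

universe v u v₂ u₂ v₃ u₃

noncomputable section

namespace PrincipalBundles

attribute [local simp] prod.lift_fst prod.lift_snd prod.lift_fst_assoc prod.lift_snd_assoc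

variable {C : Type u} [Category.{v} C] [HasFiniteLimits C]

/-- An internal group in a cartesian category `C`: an object `G` with multiplication
`m : G ⨯ G ⟶ G`, unit `e : 1 ⟶ G` and inverse `i : G ⟶ G` satisfying the group axioms. -/
structure InternalGroup (C : Type u) [Category.{v} C] [HasFiniteLimits C] where
  G : C
  m : G ⨯ G ⟶ G
  e : ⊤_ C ⟶ G
  i : G ⟶ G
  mul_assoc' : (prod.associator G G G).inv ≫ prod.map m (𝟙 G) ≫ m = prod.map (𝟙 G) m ≫ m
  one_mul' : prod.lift (terminal.from G ≫ e) (𝟙 G) ≫ m = 𝟙 G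
  mul_one' : prod.lift (𝟙 G) (terminal.from G ≫ e) ≫ m = 𝟙 G
  inv_mul' : prod.lift i (𝟙 G) ≫ m = terminal.from G ≫ e
  mul_inv' : prod.lift (𝟙 G) i ≫ m = terminal.from G ≫ e

namespace InternalGroup

variable (Gr : InternalGroup C)

/-- Multiplication of generalized elements. -/
theorem one_mul_elt {T : C} (b : T ⟶ Gr.G) :
    prod.lift (terminal.from T ≫ Gr.e) b ≫ Gr.m = b := by
  have h : prod.lift (terminal.from T ≫ Gr.e) b
      = b ≫ prod.lift (terminal.from Gr.G ≫ Gr.e) (𝟙 Gr.G) := by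
    rw [prod.comp_lift, ← Category.assoc, terminal.comp_from, Category.comp_id]
  rw [h, Category.assoc, Gr.one_mul', Category.comp_id]

theorem mul_one_elt {T : C} (a : T ⟶ Gr.G) :
    prod.lift a (terminal.from T ≫ Gr.e) ≫ Gr.m = a := by
  have h : prod.lift a (terminal.from T ≫ Gr.e)
      = a ≫ prod.lift (𝟙 Gr.G) (terminal.from Gr.G ≫ Gr.e) := by
    rw [prod.comp_lift, ← Category.assoc, terminal.comp_from, Category.comp_id]
  rw [h, Category.assoc, Gr.mul_one', Category.comp_id]

theorem mul_assoc_elt {T : C} (a b c : T ⟶ Gr.G) :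
    prod.lift (prod.lift a b ≫ Gr.m) c ≫ Gr.m = prod.lift a (prod.lift b c ≫ Gr.m) ≫ Gr.m := by
  have h1 : prod.lift (prod.lift a b ≫ Gr.m) c
      = prod.lift (prod.lift a b) c ≫ prod.map Gr.m (𝟙 _) := by simp
  have h2 : prod.lift (prod.lift a b) c
      = prod.lift a (prod.lift b c) ≫ (prod.associator Gr.G Gr.G Gr.G).inv := by
    ext <;> simp
  have h3 : prod.lift a (prod.lift b c ≫ Gr.m)
      = prod.lift a (prod.lift b c) ≫ prod.map (𝟙 _) Gr.m := by simp
  rw [h1, h2, h3, Category.assoc, Category.assoc, Gr.mul_assoc', ← Category.assoc]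

theorem inv_mul_elt {T : C} (a : T ⟶ Gr.G) :
    prod.lift (a ≫ Gr.i) a ≫ Gr.m = terminal.from T ≫ Gr.e := by
  have h : prod.lift (a ≫ Gr.i) a = a ≫ prod.lift Gr.i (𝟙 Gr.G) := by
    rw [prod.comp_lift, Category.comp_id]
  rw [h, Category.assoc, Gr.inv_mul', ← Category.assoc, terminal.comp_from]

theorem mul_inv_elt {T : C} (a : T ⟶ Gr.G) :
    prod.lift a (a ≫ Gr.i) ≫ Gr.m = terminal.from T ≫ Gr.e := by
  have h : prod.lift a (a ≫ Gr.i) = a ≫ prod.lift (𝟙 Gr.G) Gr.i := by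
    rw [prod.comp_lift, Category.comp_id]
  rw [h, Category.assoc, Gr.mul_inv', ← Category.assoc, terminal.comp_from]

/-- The monad `X ↦ G ⨯ X` on `C` associated to an internal group `G`; its unit at `X` is
`(e ∘ !, id) : X ⟶ G ⨯ X` and its multiplication at `X` is `m ⨯ id : G ⨯ (G ⨯ X) ⟶ G ⨯ X`. -/
def actionMonad : Monad C where
  toFunctor := prod.functor.obj Gr.G
  η :=
    { app := fun X => prod.lift (terminal.from X ≫ Gr.e) (𝟙 X)
      naturality := by
        intro X Y f
        dsimp [prod.functor]
        ext
        · simp [← Category.assoc, terminal.comp_from]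
        · simp }
  μ :=
    { app := fun X => (prod.associator Gr.G Gr.G X).inv ≫ prod.map Gr.m (𝟙 X)
      naturality := by
        intro X Y f
        dsimp [prod.functor]
        ext
        · simp [prod.comp_lift_assoc]
        · simp }
  assoc := by
    intro X
    dsimp [prod.functor]
    ext
    · simp only [prod.comp_lift_assoc, Category.assoc, prod.map_fst, prod.map_snd,
        prod.lift_fst, prod.lift_snd, Category.comp_id, Category.id_comp,
        prod.associator_inv, prod.lift_fst_assoc, prod.comp_lift, prod.map_fst_assoc,
        prod.map_snd_assoc, prod.lift_snd_assoc]
      exact (Gr.mul_assoc_elt _ _ _).symm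
    · simp
  left_unit := by
    intro X
    dsimp [prod.functor]
    ext
    · simp [prod.comp_lift_assoc, Gr.one_mul_elt]
    · simp
  right_unit := by
    intro X
    dsimp [prod.functor]
    ext
    · simp only [prod.comp_lift_assoc, Category.assoc, prod.map_fst, prod.map_snd,
        prod.lift_fst, prod.lift_snd, Category.comp_id, Category.id_comp,
        prod.associator_inv, prod.lift_fst_assoc]
      simp only [prod.map_snd_assoc, prod.lift_fst_assoc, Category.assoc, prod.lift_fst]
      rw [← Category.assoc prod.snd, terminal.comp_from]
      exact Gr.mul_one_elt prod.fst
    · simp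

/-- The category `[G, C]` of `G`-objects and `G`-homomorphisms: objects of `C` equipped with
a `G`-action `a : G ⨯ A ⟶ A` satisfying the unit and associativity laws, with morphisms the
morphisms of `C` commuting with the actions.  (Implemented as the Eilenberg–Moore category of
the monad `G ⨯ (-)`; the algebra axioms are literally the action axioms, and algebra morphisms
are literally the `G`-homomorphisms.) -/
abbrev GObject := (actionMonad Gr).Algebra

instance : HasFiniteLimits (GObject Gr) :=
  ⟨fun _ _ _ => ⟨fun D => Monad.hasLimit_of_comp_forget_hasLimit D⟩⟩

variable {Gr}

/-- The action of a `G`-object, seen as a morphism `G ⨯ A ⟶ A` in `C`. -/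
def act (A : GObject Gr) : Gr.G ⨯ A.A ⟶ A.A := A.a

/-- Elementwise unit law for an action. -/
theorem act_one_elt (A : GObject Gr) {T : C} (y : T ⟶ A.A) :
    prod.lift (terminal.from T ≫ Gr.e) y ≫ act A = y := by
  have h : prod.lift (terminal.from T ≫ Gr.e) y
      = y ≫ prod.lift (terminal.from A.A ≫ Gr.e) (𝟙 A.A) := by
    rw [prod.comp_lift, ← Category.assoc, terminal.comp_from, Category.comp_id]
  have hu := A.unit
  dsimp [actionMonad] at hu
  rw [h, Category.assoc, act]
  erw [hu]
  rw [Category.comp_id]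

/-- Elementwise associativity law for an action. -/
theorem act_assoc_elt (A : GObject Gr) {T : C} (a b : T ⟶ Gr.G) (y : T ⟶ A.A) :
    prod.lift (prod.lift a b ≫ Gr.m) y ≫ act A
      = prod.lift a (prod.lift b y ≫ act A) ≫ act A := by
  have ha : (prod.associator Gr.G Gr.G A.A).inv ≫ prod.map Gr.m (𝟙 A.A) ≫ A.a
      = prod.map (𝟙 Gr.G) A.a ≫ A.a := by
    have ha0 := A.assoc
    dsimp [actionMonad, prod.functor] at ha0
    simp only [Category.assoc] at ha0
    exact ha0
  have h1 : prod.lift (prod.lift a b ≫ Gr.m) y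
      = prod.lift (prod.lift a b) y ≫ prod.map Gr.m (𝟙 _) := by simp
  have h2 : prod.lift (prod.lift a b) y
      = prod.lift a (prod.lift b y) ≫ (prod.associator Gr.G Gr.G A.A).inv := by
    ext <;> simp
  have h3 : prod.lift a (prod.lift b y ≫ act A)
      = prod.lift a (prod.lift b y) ≫ prod.map (𝟙 _) (act A) := by simp
  rw [h1, h2, h3, Category.assoc, Category.assoc, act]
  erw [ha]
  exact (Category.assoc _ _ _).symm

variable (Gr)

/-- The functor `G* : C ⥤ [G, C]` equipping an object with the trivial action `π₂`. -/
def trivAction : C ⥤ GObject Gr where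
  obj X :=
    { A := X
      a := prod.snd
      unit := by simp [actionMonad]; exact prod.lift_snd _ _
      assoc := by simp [actionMonad, prod.functor] }
  map f :=
    { f := f
      h := by simp [actionMonad, prod.functor] }
  map_id X := by ext; rfl
  map_comp f g := by ext; rfl

/-- The `G`-object `(G, m)`: `G` acting on itself by multiplication. -/
def selfAction : GObject Gr where
  A := Gr.G
  a := Gr.m
  unit := Gr.one_mul'
  assoc := by
    have h := Gr.mul_assoc'
    dsimp [actionMonad, prod.functor]
    simpa [Category.assoc] using h

/-- The product of two `G`-objects: the product in `C` with the componentwise action. -/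
def prodGObject (A B : GObject Gr) : GObject Gr where
  A := A.A ⨯ B.A
  a := prod.lift (prod.map (𝟙 Gr.G) (prod.fst : A.A ⨯ B.A ⟶ A.A) ≫ act A)
    (prod.map (𝟙 Gr.G) (prod.snd : A.A ⨯ B.A ⟶ B.A) ≫ act B)
  unit := by
    show prod.lift (terminal.from (A.A ⨯ B.A) ≫ Gr.e) (𝟙 (A.A ⨯ B.A)) ≫
      prod.lift (prod.map (𝟙 Gr.G) (prod.fst : A.A ⨯ B.A ⟶ A.A) ≫ act A)
        (prod.map (𝟙 Gr.G) (prod.snd : A.A ⨯ B.A ⟶ B.A) ≫ act B) = 𝟙 _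
    apply Limits.prod.hom_ext
    · simp only [Category.assoc, prod.lift_fst, prod.lift_map_assoc, Category.comp_id,
        Category.id_comp]
      exact act_one_elt A prod.fst
    · simp only [Category.assoc, prod.lift_snd, prod.lift_map_assoc, Category.comp_id,
        Category.id_comp]
      exact act_one_elt B prod.snd
  assoc := by
    dsimp [actionMonad, prod.functor]
    apply Limits.prod.hom_ext
    · simp only [prod.comp_lift_assoc, Category.assoc, prod.map_fst, prod.map_snd,
        prod.lift_fst, prod.lift_snd, Category.comp_id, Category.id_comp,
        prod.associator_inv, prod.lift_fst_assoc, prod.comp_lift, prod.map_fst_assoc,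
        prod.map_snd_assoc, prod.lift_snd_assoc, prod.map_map_assoc, prod.map_map]
      rw [prod.lift_map_assoc]
      have hR : prod.map (𝟙 Gr.G) (prod.map (𝟙 Gr.G) (prod.fst : A.A ⨯ B.A ⟶ A.A) ≫ act A) ≫
              act A
          = prod.lift (prod.fst : Gr.G ⨯ (Gr.G ⨯ (A.A ⨯ B.A)) ⟶ Gr.G)
              (prod.lift ((prod.snd : Gr.G ⨯ (Gr.G ⨯ (A.A ⨯ B.A)) ⟶ Gr.G ⨯ (A.A ⨯ B.A)) ≫
                  prod.fst)
                ((prod.snd ≫ prod.snd) ≫ prod.fst) ≫ act A) ≫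
            act A := by
        congr 1
        apply Limits.prod.hom_ext
        · simp
        · simp only [prod.map_snd, prod.lift_snd]
          rw [← Category.assoc]
          congr 1
          apply Limits.prod.hom_ext <;> simp
      rw [hR]
      exact act_assoc_elt A prod.fst (prod.snd ≫ prod.fst) ((prod.snd ≫ prod.snd) ≫ prod.fst)
    · simp only [prod.comp_lift_assoc, Category.assoc, prod.map_fst, prod.map_snd,
        prod.lift_fst, prod.lift_snd, Category.comp_id, Category.id_comp,
        prod.associator_inv, prod.lift_fst_assoc, prod.comp_lift, prod.map_fst_assoc,
        prod.map_snd_assoc, prod.lift_snd_assoc, prod.map_map_assoc, prod.map_map]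
      rw [prod.lift_map_assoc]
      have hR : prod.map (𝟙 Gr.G) (prod.map (𝟙 Gr.G) (prod.snd : A.A ⨯ B.A ⟶ B.A) ≫ act B) ≫
              act B
          = prod.lift (prod.fst : Gr.G ⨯ (Gr.G ⨯ (A.A ⨯ B.A)) ⟶ Gr.G)
              (prod.lift ((prod.snd : Gr.G ⨯ (Gr.G ⨯ (A.A ⨯ B.A)) ⟶ Gr.G ⨯ (A.A ⨯ B.A)) ≫
                  prod.fst)
                ((prod.snd ≫ prod.snd) ≫ prod.snd) ≫ act B) ≫
            act B := by
        congr 1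
        apply Limits.prod.hom_ext
        · simp
        · simp only [prod.map_snd, prod.lift_snd]
          rw [← Category.assoc]
          congr 1
          apply Limits.prod.hom_ext <;> simp
      rw [hR]
      exact act_assoc_elt B prod.fst (prod.snd ≫ prod.fst) ((prod.snd ≫ prod.snd) ≫ prod.snd)

variable {Gr}

/-- First projection of the product of `G`-objects. -/
def prodGFst (A B : GObject Gr) : prodGObject Gr A B ⟶ A where
  f := prod.fst
  h := by simp [prodGObject, actionMonad, prod.functor, act]

/-- Second projection of the product of `G`-objects. -/
def prodGSnd (A B : GObject Gr) : prodGObject Gr A B ⟶ B where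
  f := prod.snd
  h := by simp [prodGObject, actionMonad, prod.functor, act]

/-- Functoriality of the product of `G`-objects. -/
def prodGHom {A A' B B' : GObject Gr} (u : A ⟶ A') (v : B ⟶ B') :
    prodGObject Gr A B ⟶ prodGObject Gr A' B' where
  f := prod.map u.f v.f
  h := by
    have hu : prod.map (𝟙 Gr.G) u.f ≫ act A' = act A ≫ u.f := by
      have h0 := u.h; dsimp [actionMonad, prod.functor] at h0; exact h0
    have hv : prod.map (𝟙 Gr.G) v.f ≫ act B' = act B ≫ v.f := by
      have h0 := v.h; dsimp [actionMonad, prod.functor] at h0; exact h0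
    dsimp [prodGObject, actionMonad, prod.functor]
    apply Limits.prod.hom_ext
    · simp only [Category.assoc, prod.lift_fst, prod.map_fst, prod.lift_fst_assoc]
      rw [← Category.assoc, prod.map_map, Category.id_comp, prod.map_fst]
      rw [show prod.map (𝟙 Gr.G) (prod.fst ≫ u.f)
            = prod.map (𝟙 Gr.G) prod.fst ≫ prod.map (𝟙 Gr.G) u.f by
          rw [prod.map_map, Category.comp_id]]
      rw [Category.assoc, hu]
    · simp only [Category.assoc, prod.lift_snd, prod.map_snd, prod.lift_snd_assoc]
      rw [← Category.assoc, prod.map_map, Category.id_comp, prod.map_snd]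
      rw [show prod.map (𝟙 Gr.G) (prod.snd ≫ v.f)
            = prod.map (𝟙 Gr.G) prod.snd ≫ prod.map (𝟙 Gr.G) v.f by
          rw [prod.map_map, Category.comp_id]]
      rw [Category.assoc, hv]

variable (Gr)

/-- The functor `(P, p) ⨯ (-) : [G, C] ⥤ [G, C]`. -/
def prodGFunctor (P : GObject Gr) : GObject Gr ⥤ GObject Gr where
  obj A := prodGObject Gr P A
  map h := prodGHom (𝟙 P) h
  map_id A := by
    apply Monad.Algebra.Hom.ext
    show prod.map (𝟙 P : P ⟶ P).f (𝟙 A : A ⟶ A).f = (𝟙 (prodGObject Gr P A) : _ ⟶ _).f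
    rw [Monad.Algebra.id_f, Monad.Algebra.id_f, Monad.Algebra.id_f, prod.map_id_id]
    rfl
  map_comp f g := by
    apply Monad.Algebra.Hom.ext
    show prod.map (𝟙 P : P ⟶ P).f (f ≫ g).f = (prodGHom (𝟙 P) f ≫ prodGHom (𝟙 P) g).f
    rw [Monad.Algebra.comp_f, Monad.Algebra.comp_f]
    show prod.map (𝟙 P : P ⟶ P).f (f.f ≫ g.f)
        = prod.map (𝟙 P : P ⟶ P).f f.f ≫ prod.map (𝟙 P : P ⟶ P).f g.f
    rw [prod.map_map]
    rw [Monad.Algebra.id_f, Category.comp_id]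

end InternalGroup

open InternalGroup

section Frobenius

variable {D : Type u₂} [Category.{v₂} D] [HasFiniteLimits D]
variable {E : Type u₃} [Category.{v₃} E] [HasFiniteLimits E]

/-- The canonical Frobenius map `L(R X ⨯ W) ⟶ X ⨯ L W` of an adjunction `L ⊣ R`, namely
`(L π₁, L π₂)` followed by `ε_X ⨯ id` where `ε` is the counit. -/
def frobMap {L : D ⥤ E} {R : E ⥤ D} (adj : L ⊣ R) (W : D) (X : E) :
    L.obj (R.obj X ⨯ W) ⟶ X ⨯ L.obj W :=
  prod.lift (L.map prod.fst ≫ adj.counit.app X) (L.map prod.snd)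

/-- An adjunction `L ⊣ R` between cartesian categories satisfies Frobenius reciprocity if
all the canonical maps `L(R X ⨯ W) ⟶ X ⨯ L W` are isomorphisms. -/
def IsFrobenius {L : D ⥤ E} {R : E ⥤ D} (adj : L ⊣ R) : Prop :=
  ∀ (W : D) (X : E), IsIso (frobMap adj W X)

/-- The left adjoint of the adjunction `L ⊣ R` sliced at `X`, sending `g : W ⟶ R X`
to its adjoint transpose `L W ⟶ X`. -/
def slicedL {L : D ⥤ E} {R : E ⥤ D} (adj : L ⊣ R) (X : E) : Over (R.obj X) ⥤ Over X where
  obj W := Over.mk (L.map W.hom ≫ adj.counit.app X)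
  map {W W'} u :=
    Over.homMk (L.map u.left) (by
      dsimp
      rw [← Category.assoc, ← L.map_comp, Over.w u])
  map_id W := by ext; dsimp; simp
  map_comp f g := by ext; dsimp; simp

/-- The right adjoint of the adjunction `L ⊣ R` sliced at `X`, sending `f : Y ⟶ X` to
`R f : R Y ⟶ R X`. -/
def slicedR {L : D ⥤ E} {R : E ⥤ D} (adj : L ⊣ R) (X : E) : Over X ⥤ Over (R.obj X) where
  obj Y := Over.mk (R.map Y.hom)
  map {Y Y'} u :=
    Over.homMk (R.map u.left) (by
      dsimp
      rw [← R.map_comp, Over.w u])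
  map_id Y := by ext; dsimp; simp
  map_comp f g := by ext; dsimp; simp

/-- The sliced adjunction `L_X ⊣ R_X : D / R X ⇄ E / X` of `L ⊣ R` at an object `X`. -/
def slicedAdj {L : D ⥤ E} {R : E ⥤ D} (adj : L ⊣ R) (X : E) : slicedL adj X ⊣ slicedR adj X :=
  Adjunction.mkOfHomEquiv
    { homEquiv := fun W Y =>
        { toFun := fun u => Over.homMk ((adj.homEquiv _ _) u.left) (by
            have hu := Over.w u
            dsimp [slicedL] at hu
            dsimp [slicedR]
            erw [Adjunction.homEquiv_unit]
            erw [Category.assoc, ← R.map_comp, hu, R.map_comp,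
              adj.unit_naturality_assoc, adj.right_triangle_components, Category.comp_id])
          invFun := fun v => Over.homMk ((adj.homEquiv _ _).symm v.left) (by
            have hv := Over.w v
            dsimp [slicedR] at hv
            dsimp [slicedL]
            erw [Adjunction.homEquiv_counit]
            erw [Category.assoc, ← adj.counit_naturality,
              ← Category.assoc, ← L.map_comp, hv])
          left_inv := fun u => by ext; exact (adj.homEquiv _ _).symm_apply_apply _
          right_inv := fun v => by ext; exact (adj.homEquiv _ _).apply_symm_apply _ }
      homEquiv_naturality_left_symm := by
        intro W' W Y f g
        ext
        exact adj.homEquiv_naturality_left_symm f.left g.left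
      homEquiv_naturality_right := by
        intro W Y Y' f g
        ext
        exact adj.homEquiv_naturality_right f.left g.left }

/-- An adjunction between cartesian categories is stably Frobenius if every sliced
adjunction satisfies Frobenius reciprocity. -/
def IsStablyFrobenius {L : D ⥤ E} {R : E ⥤ D} (adj : L ⊣ R) : Prop :=
  ∀ X : E, IsFrobenius (slicedAdj adj X)

end Frobenius

/-- A morphism `f : X ⟶ Y` is an effective descent morphism if the pullback functor
`f* : C/Y ⥤ C/X` is monadic. -/
def EffectiveDescentMorphism {X Y : C} (f : X ⟶ Y) : Prop :=
  Nonempty (MonadicRightAdjoint (Over.pullback f))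

/-- A principal `G`-bundle: a `G`-object `(P, p)` such that `! : P ⟶ 1` is an effective
descent morphism and `(p, π₂) : G ⨯ P ⟶ P ⨯ P` is an isomorphism. -/
def IsPrincipal (Gr : InternalGroup C) (P : InternalGroup.GObject Gr) : Prop :=
  EffectiveDescentMorphism (terminal.from P.A) ∧
    IsIso (prod.lift (InternalGroup.act P) prod.snd)

/-- The functor `C ⥤ C/P` sending `X` to the projection `P ⨯ X ⟶ P`. -/
def projFunctor (P : C) : C ⥤ Over P where
  obj X := Over.mk (prod.fst : P ⨯ X ⟶ P)
  map {X Y} f := Over.homMk (prod.map (𝟙 P) f) (by simp)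
  map_id X := by ext; dsimp; simp
  map_comp f g := by ext; dsimp; simp

theorem cofork_condition (Gr : InternalGroup C) (P : InternalGroup.GObject Gr) (X : C) :
    ((prod.associator Gr.G P.A X).inv ≫ prod.map (InternalGroup.act P) (𝟙 X)) ≫
        (prod.snd : P.A ⨯ X ⟶ X)
      = (prod.snd : Gr.G ⨯ (P.A ⨯ X) ⟶ P.A ⨯ X) ≫ prod.snd := by
  simp

/-- The object `G ⨯ X` of `C/X` underlying the internal group induced by `G` in `C/X`. -/
def overG (Gr : InternalGroup C) (X : C) : Over X := Over.mk (prod.snd : Gr.G ⨯ X ⟶ X)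

section OverGroup

variable {Gr : InternalGroup C} {X : C}

/-- The `G`-component of a morphism into `G ⨯ X` over `X`. -/
abbrev toG {A : Over X} (u : A ⟶ overG Gr X) : A.left ⟶ Gr.G := u.left ≫ prod.fst

theorem homGX_ext {A : Over X} {u v : A ⟶ overG Gr X} (h : toG u = toG v) : u = v := by
  ext
  apply Limits.prod.hom_ext
  · exact h
  · have hu := Over.w u
    have hv := Over.w v
    dsimp [overG] at hu hv
    rw [hu, hv]

theorem toG_comp {A B : Over X} (w : A ⟶ B) (u : B ⟶ overG Gr X) :
    toG (w ≫ u) = w.left ≫ toG u := by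
  dsimp [toG]
  exact Category.assoc _ _ _

variable (Gr X)

/-- The multiplication `m ⨯ id_X : (G ⨯ G) ⨯ X ⟶ G ⨯ X` of the induced group in `C/X`,
viewing `(G ⨯ X) ⨯_X (G ⨯ X) ≅ (G ⨯ G) ⨯ X`. -/
def overMul : overG Gr X ⨯ overG Gr X ⟶ overG Gr X :=
  Over.homMk
    (prod.lift
      (prod.lift (toG (prod.fst : overG Gr X ⨯ overG Gr X ⟶ overG Gr X))
        (toG (prod.snd : overG Gr X ⨯ overG Gr X ⟶ overG Gr X)) ≫ Gr.m)
      (overG Gr X ⨯ overG Gr X).hom)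
    (by simp [overG])

/-- The unit `(e ∘ !, id_X) : X ⟶ G ⨯ X` of the induced group in `C/X`. -/
def overOne : ⊤_ (Over X) ⟶ overG Gr X :=
  Over.homMk (prod.lift (terminal.from (⊤_ Over X).left ≫ Gr.e) (⊤_ Over X).hom)
    (by simp [overG])

/-- The inverse `i ⨯ id_X : G ⨯ X ⟶ G ⨯ X` of the induced group in `C/X`. -/
def overInv : overG Gr X ⟶ overG Gr X :=
  Over.homMk (prod.map Gr.i (𝟙 X)) (by simp [overG])

variable {Gr X}

theorem toG_overMul {A : Over X} (u : A ⟶ overG Gr X ⨯ overG Gr X) :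
    toG (u ≫ overMul Gr X)
      = prod.lift (toG (u ≫ prod.fst)) (toG (u ≫ prod.snd)) ≫ Gr.m := by
  rw [toG_comp]
  dsimp [overMul, toG]
  erw [prod.lift_fst]
  rw [prod.comp_lift_assoc]
  congr 2 <;> exact (Category.assoc _ _ _).symm

theorem toG_overOne {A : Over X} (u : A ⟶ ⊤_ (Over X)) :
    toG (u ≫ overOne Gr X) = terminal.from A.left ≫ Gr.e := by
  rw [toG_comp]
  dsimp [overOne, toG]
  erw [prod.lift_fst]
  rw [← Category.assoc, terminal.comp_from]

end OverGroup

/-- The internal group `G ⨯ X` in the slice category `C/X` induced by an internal group `G`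
of `C`: its multiplication is induced by `m ⨯ id_X`, its unit by `(e ∘ !, id_X)` and its
inverse by `i ⨯ id_X`. -/
def inducedGroup (Gr : InternalGroup C) (X : C) : InternalGroup (Over X) where
  G := overG Gr X
  m := overMul Gr X
  e := overOne Gr X
  i := overInv Gr X
  one_mul' := by
    apply homGX_ext
    rw [toG_overMul, prod.lift_fst, prod.lift_snd, toG_overOne]
    simp only [toG, Over.id_left, Category.id_comp]
    erw [Category.id_comp]
    exact Gr.one_mul_elt (prod.fst : Gr.G ⨯ X ⟶ Gr.G)
  mul_one' := by
    apply homGX_ext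
    rw [toG_overMul, prod.lift_fst, prod.lift_snd, toG_overOne]
    simp only [toG, Over.id_left, Category.id_comp]
    erw [Category.id_comp]
    exact Gr.mul_one_elt (prod.fst : Gr.G ⨯ X ⟶ Gr.G)
  mul_assoc' := by
    apply homGX_ext
    have l1 : ((prod.associator (overG Gr X) (overG Gr X) (overG Gr X)).inv ≫
          prod.map (overMul Gr X) (𝟙 (overG Gr X))) ≫ prod.fst
        = prod.lift prod.fst (prod.snd ≫ prod.fst) ≫ overMul Gr X := by
      rw [Category.assoc, prod.map_fst, ← Category.assoc]
      congr 1
      simp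
    have l2 : ((prod.associator (overG Gr X) (overG Gr X) (overG Gr X)).inv ≫
          prod.map (overMul Gr X) (𝟙 (overG Gr X))) ≫ prod.snd
        = prod.snd ≫ prod.snd := by
      rw [Category.assoc, prod.map_snd, Category.comp_id]
      simp
    have l3 : prod.map (𝟙 (overG Gr X)) (overMul Gr X) ≫
          (prod.fst : overG Gr X ⨯ overG Gr X ⟶ overG Gr X) = prod.fst := by
      rw [prod.map_fst, Category.comp_id]
    have l4 : prod.map (𝟙 (overG Gr X)) (overMul Gr X) ≫
          (prod.snd : overG Gr X ⨯ overG Gr X ⟶ overG Gr X)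
        = prod.snd ≫ overMul Gr X := by
      rw [prod.map_snd]
    rw [← Category.assoc, toG_overMul, l1, l2, toG_overMul, prod.lift_fst, prod.lift_snd]
    rw [toG_overMul, l3, l4, toG_overMul]
    exact Gr.mul_assoc_elt _ _ _
  inv_mul' := by
    apply homGX_ext
    rw [toG_overMul, prod.lift_fst, prod.lift_snd, toG_overOne]
    have hi : toG (overInv Gr X) = prod.fst ≫ Gr.i := by
      dsimp [overInv, toG]
      erw [prod.map_fst]
    rw [hi]
    simp only [toG, Over.id_left, Category.id_comp]
    erw [Category.id_comp]
    exact Gr.inv_mul_elt (prod.fst : Gr.G ⨯ X ⟶ Gr.G)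
  mul_inv' := by
    apply homGX_ext
    rw [toG_overMul, prod.lift_fst, prod.lift_snd, toG_overOne]
    have hi : toG (overInv Gr X) = prod.fst ≫ Gr.i := by
      dsimp [overInv, toG]
      erw [prod.map_fst]
    rw [hi]
    simp only [toG, Over.id_left, Category.id_comp]
    erw [Category.id_comp]
    exact Gr.mul_inv_elt (prod.fst : Gr.G ⨯ X ⟶ Gr.G)

/-- A principal `G`-bundle over an object `X` of `C`: a `G`-object `(P, p)` with an
action-invariant morphism `f : P ⟶ X` which is an effective descent morphism and such that
`(p, π₂) : G ⨯ P ⟶ P ⨯_X P` is an isomorphism. -/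
structure PrincipalBundleOver (Gr : InternalGroup C) (X : C) where
  P : InternalGroup.GObject Gr
  f : P.A ⟶ X
  invariant : InternalGroup.act P ≫ f = prod.snd ≫ f
  descent : EffectiveDescentMorphism f
  torsor : IsIso (pullback.lift (InternalGroup.act P) prod.snd invariant)

namespace PrincipalBundleOver

variable {Gr : InternalGroup C} {X : C}

/-- A morphism of principal `G`-bundles over `X`: a `G`-homomorphism over `X`. -/
@[ext]
structure Hom (P Q : PrincipalBundleOver Gr X) where
  hom : P.P ⟶ Q.P
  w : hom.f ≫ Q.f = P.f

/-- The category of principal `G`-bundles over `X`. -/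
instance : Category (PrincipalBundleOver Gr X) where
  Hom P Q := Hom P Q
  id P := ⟨𝟙 P.P, by rw [Monad.Algebra.id_f]; simp⟩
  comp u v := ⟨u.hom ≫ v.hom, by rw [Monad.Algebra.comp_f, Category.assoc, v.w, u.w]⟩
  id_comp u := by apply Hom.ext; simp
  comp_id u := by apply Hom.ext; simp
  assoc u v w := by apply Hom.ext; simp

end PrincipalBundleOver

/-- The category of adjunctions `L ⊣ R : C ⇄ [G, C]` over `C` (i.e. `Σ_G ∘ L ≅ Id_C`)
satisfying Frobenius reciprocity; morphisms are natural transformations between the left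
adjoints. -/
structure FrobAdjObj (Gr : InternalGroup C) (SG : InternalGroup.GObject Gr ⥤ C) where
  L : C ⥤ InternalGroup.GObject Gr
  R : InternalGroup.GObject Gr ⥤ C
  adj : L ⊣ R
  isOver : Nonempty (L ⋙ SG ≅ 𝟭 C)
  frob : IsFrobenius adj

/-- A morphism of adjunctions over `C`: a natural transformation between the left adjoints. -/
@[ext]
structure FrobAdjHom {Gr : InternalGroup C} {SG : InternalGroup.GObject Gr ⥤ C}
    (A B : FrobAdjObj Gr SG) where
  nat : A.L ⟶ B.L

instance (Gr : InternalGroup C) (SG : InternalGroup.GObject Gr ⥤ C) :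
    Category (FrobAdjObj Gr SG) where
  Hom A B := FrobAdjHom A B
  id A := ⟨𝟙 A.L⟩
  comp u v := ⟨u.nat ≫ v.nat⟩
  id_comp u := by apply FrobAdjHom.ext; simp
  comp_id u := by apply FrobAdjHom.ext; simp
  assoc u v w := by apply FrobAdjHom.ext; simp

/-- The category of adjunctions `L ⊣ R : C/X ⇄ [G, C]` over `C` (i.e. `Σ_G ∘ L ≅ Σ_X`)
that are stably Frobenius; morphisms are natural transformations between the left adjoints. -/
structure StablyFrobAdjOver (Gr : InternalGroup C) (SG : InternalGroup.GObject Gr ⥤ C)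
    (X : C) where
  L : Over X ⥤ InternalGroup.GObject Gr
  R : InternalGroup.GObject Gr ⥤ Over X
  adj : L ⊣ R
  isOver : Nonempty (L ⋙ SG ≅ Over.forget X)
  frob : IsStablyFrobenius adj

/-- A morphism of adjunctions over `C`: a natural transformation between the left adjoints. -/
@[ext]
structure StablyFrobAdjHom {Gr : InternalGroup C} {SG : InternalGroup.GObject Gr ⥤ C} {X : C}
    (A B : StablyFrobAdjOver Gr SG X) where
  nat : A.L ⟶ B.L

instance (Gr : InternalGroup C) (SG : InternalGroup.GObject Gr ⥤ C) (X : C) :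
    Category (StablyFrobAdjOver Gr SG X) where
  Hom A B := StablyFrobAdjHom A B
  id A := ⟨𝟙 A.L⟩
  comp u v := ⟨u.nat ≫ v.nat⟩
  id_comp u := by apply StablyFrobAdjHom.ext; simp
  comp_id u := by apply StablyFrobAdjHom.ext; simp
  assoc u v w := by apply StablyFrobAdjHom.ext; simp

end PrincipalBundles

/-! Frobenius reciprocity of `L ⊣ R` at `W = 1` gives `L (R X) ≅ X ⨯ P` with `P = L 1`. Together with
Frobenius reciprocity of `Σ_G ⊣ G*` and `Σ_G ∘ L = Id` (so `Σ_G P = 1`), this makes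
`(L !, σ_W) : L W ⟶ P ⨯ G* W` invertible for every `W`, where `σ_W` is the transpose of
`Σ_G (L W) = W`. For `W = R (G, m)`, the shear `(g, x) ↦ (g, g⁻¹ x)` identifies
`L (R (G, m)) ≅ (G, m) ⨯ P` with `(G, m) ⨯ G* P`, and through it the torsor map `(g, x) ↦ (g x, x)`
becomes `(L !, σ)` followed by `id ⨯ G* j`, where `j : R (G, m) ⟶ P` is the `Σ_G`-transpose of the
second component. Finally `j` is invertible because `Σ_G (G, m) ≅ 1` and `Σ_G` is Frobenius. -/

namespace PrincipalBundles

attribute [local simp] prod.lift_fst prod.lift_snd prod.lift_fst_assoc prod.lift_snd_assoc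

section Frobenius

variable {D : Type u₂} [Category.{v₂} D] [HasFiniteLimits D]
variable {E : Type u₃} [Category.{v₃} E] [HasFiniteLimits E]
variable {L : D ⥤ E} {R : E ⥤ D} (adj : L ⊣ R)

@[simp]
theorem frobMap_fst (W : D) (X : E) :
    frobMap adj W X ≫ prod.fst = L.map prod.fst ≫ adj.counit.app X :=
  prod.lift_fst _ _

@[simp]
theorem frobMap_snd (W : D) (X : E) : frobMap adj W X ≫ prod.snd = L.map prod.snd :=
  prod.lift_snd _ _

theorem isIso_map_fst_comp_counit (h : IsFrobenius adj) {W : D} (hW : IsTerminal (L.obj W))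
    (X : E) : IsIso (L.map (prod.fst : R.obj X ⨯ W ⟶ R.obj X) ≫ adj.counit.app X) := by
  have : IsIso (prod.fst : X ⨯ L.obj W ⟶ X) :=
    (BinaryFan.isLimit_iff_isIso_fst hW (BinaryFan.mk _ _)).mp ⟨prodIsProd _ _⟩
  have := h W X
  rw [← frobMap_fst]
  infer_instance

theorem isIso_map_snd_comp_counit (h : IsFrobenius adj) {W : D} (hW : IsTerminal (L.obj W))
    (X : E) : IsIso (L.map (prod.snd : W ⨯ R.obj X ⟶ R.obj X) ≫ adj.counit.app X) := by
  have := isIso_map_fst_comp_counit adj h hW X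
  have hswap : (prod.snd : W ⨯ R.obj X ⟶ R.obj X) = (prod.braiding _ _).hom ≫ prod.fst :=
    (prod.lift_fst _ _).symm
  rw [hswap, L.map_comp_assoc]
  infer_instance

def frobeniusIso (h : IsFrobenius adj) (X : E) : L.obj (R.obj X) ≅ X ⨯ L.obj (⊤_ D) :=
  have := h (⊤_ D) X
  L.mapIso (prod.rightUnitor (R.obj X)).symm ≪≫ asIso (frobMap adj (⊤_ D) X)

@[simp]
theorem frobeniusIso_hom_fst (h : IsFrobenius adj) (X : E) :
    (frobeniusIso adj h X).hom ≫ prod.fst = adj.counit.app X := by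
  simp only [frobeniusIso, Iso.trans_hom, Functor.mapIso_hom, Iso.symm_hom, asIso_hom,
    Category.assoc, frobMap_fst]
  rw [← L.map_comp_assoc]
  erw [prod.lift_fst]
  rw [L.map_id, Category.id_comp]

@[simp]
theorem frobeniusIso_hom_snd (h : IsFrobenius adj) (X : E) :
    (frobeniusIso adj h X).hom ≫ prod.snd = L.map (terminal.from (R.obj X)) := by
  simp only [frobeniusIso, Iso.trans_hom, Functor.mapIso_hom, Iso.symm_hom, asIso_hom,
    Category.assoc, frobMap_snd, ← L.map_comp]
  congr 1
  exact Subsingleton.elim _ _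

end Frobenius

section Over

variable {C : Type u} [Category.{v} C] {E : Type u₃} [Category.{v₃} E]
variable {S : E ⥤ C} {T : C ⥤ E} (sadj : S ⊣ T)
variable {L : C ⥤ E} {R : E ⥤ C} (adj : L ⊣ R) (e : L ⋙ S ≅ 𝟭 C)

def transposeOver (W : C) : L.obj W ⟶ T.obj W :=
  sadj.homEquiv _ _ (e.hom.app W)

theorem transposeOver_comp_map (W : C) {V : C} (κ : L.obj W ⟶ T.obj V) :
    transposeOver sadj e W ≫ T.map (e.inv.app W ≫ S.map κ ≫ sadj.counit.app V) = κ := by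
  rw [transposeOver, ← Adjunction.homEquiv_naturality_right, Iso.hom_inv_id_app_assoc]
  simp [Adjunction.homEquiv_unit]

theorem homEquiv_transposeOver_comp (W : C) :
    adj.homEquiv _ _ (transposeOver sadj e W) ≫ e.inv.app _ ≫
        S.map (adj.counit.app (T.obj W)) ≫ sadj.counit.app W = 𝟙 W := by
  have hnat := e.inv.naturality (adj.homEquiv _ _ (transposeOver sadj e W))
  dsimp at hnat
  rw [← Category.assoc, hnat, Category.assoc, ← S.map_comp_assoc]
  simp [transposeOver, Adjunction.homEquiv_unit]

theorem isIso_homEquiv_transposeOver [HasFiniteLimits C] [HasFiniteLimits E]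
    (hS : IsFrobenius sadj) (hL : IsFrobenius adj) (W : C) :
    IsIso (adj.homEquiv _ _ (transposeOver sadj e W)) := by
  have : IsIso (S.map (prod.fst : T.obj W ⨯ L.obj (⊤_ C) ⟶ T.obj W) ≫ sadj.counit.app W) :=
    isIso_map_fst_comp_counit sadj hS (IsTerminal.ofIso terminalIsTerminal (e.app _).symm) W
  have : IsIso (e.inv.app _ ≫ S.map (adj.counit.app (T.obj W)) ≫ sadj.counit.app W) := by
    rw [← frobeniusIso_hom_fst adj hL, S.map_comp_assoc]
    infer_instance
  have : IsIso (adj.homEquiv _ _ (transposeOver sadj e W) ≫ e.inv.app _ ≫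
      S.map (adj.counit.app (T.obj W)) ≫ sadj.counit.app W) := by
    rw [homEquiv_transposeOver_comp]
    infer_instance
  exact IsIso.of_isIso_comp_right _
    (e.inv.app _ ≫ S.map (adj.counit.app (T.obj W)) ≫ sadj.counit.app W)

theorem isIso_lift_map_from_transposeOver [HasFiniteLimits C] [HasFiniteLimits E]
    (hS : IsFrobenius sadj) (hL : IsFrobenius adj) (W : C) :
    IsIso (prod.lift (L.map (terminal.from W)) (transposeOver sadj e W)) := by
  have := isIso_homEquiv_transposeOver sadj adj e hS hL W
  have hfactor : prod.lift (L.map (terminal.from W)) (transposeOver sadj e W)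
      = L.map (adj.homEquiv _ _ (transposeOver sadj e W)) ≫
          (frobeniusIso adj hL (T.obj W)).hom ≫ (prod.braiding _ _).hom := by
    apply prod.hom_ext
    · simp [← L.map_comp]
    · simp [Adjunction.homEquiv_unit]
  rw [hfactor]
  infer_instance

end Over

namespace InternalGroup

variable {C : Type u} [Category.{v} C] [HasFiniteLimits C] {Gr : InternalGroup C}

theorem act_comp_hom {A B : GObject Gr} (u : A ⟶ B) :
    prod.map (𝟙 Gr.G) u.f ≫ act B = act A ≫ u.f :=
  u.h

def prodGLift {X A B : GObject Gr} (u : X ⟶ A) (w : X ⟶ B) : X ⟶ prodGObject Gr A B where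
  f := prod.lift u.f w.f
  h := by
    change prod.map (𝟙 Gr.G) (prod.lift u.f w.f) ≫ prod.lift (prod.map (𝟙 Gr.G) prod.fst ≫ act A)
      (prod.map (𝟙 Gr.G) prod.snd ≫ act B) = act X ≫ prod.lift u.f w.f
    apply prod.hom_ext
    · simp [← act_comp_hom]
    · simp [← act_comp_hom]

@[simp]
theorem prodGHom_fst {A A' B B' : GObject Gr} (u : A ⟶ A') (w : B ⟶ B') :
    prodGHom u w ≫ prodGFst A' B' = prodGFst A B ≫ u := by
  ext
  exact prod.map_fst _ _

@[simp]
theorem prodGHom_snd {A A' B B' : GObject Gr} (u : A ⟶ A') (w : B ⟶ B') :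
    prodGHom u w ≫ prodGSnd A' B' = prodGSnd A B ≫ w := by
  ext
  exact prod.map_snd _ _

instance isIso_prodGHom {A A' B B' : GObject Gr} (u : A ⟶ A') (w : B ⟶ B') [IsIso u]
    [IsIso w] : IsIso (prodGHom u w) :=
  have : IsIso ((actionMonad Gr).forget.map (prodGHom u w)) :=
    inferInstanceAs
      (IsIso (prod.map ((actionMonad Gr).forget.map u) ((actionMonad Gr).forget.map w)))
  isIso_of_reflects_iso _ (actionMonad Gr).forget

@[simp]
theorem prodGLift_fst {X A B : GObject Gr} (u : X ⟶ A) (w : X ⟶ B) :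
    prodGLift u w ≫ prodGFst A B = u := by
  ext
  exact prod.lift_fst _ _

@[simp]
theorem prodGLift_snd {X A B : GObject Gr} (u : X ⟶ A) (w : X ⟶ B) :
    prodGLift u w ≫ prodGSnd A B = w := by
  ext
  exact prod.lift_snd _ _

theorem prodGObject_hom_ext {X A B : GObject Gr} {u w : X ⟶ prodGObject Gr A B}
    (h₁ : u ≫ prodGFst A B = w ≫ prodGFst A B) (h₂ : u ≫ prodGSnd A B = w ≫ prodGSnd A B) :
    u = w := by
  ext
  exact prod.hom_ext (congrArg Monad.Algebra.Hom.f h₁) (congrArg Monad.Algebra.Hom.f h₂)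

def prodGIso (A B : GObject Gr) : A ⨯ B ≅ prodGObject Gr A B where
  hom := prodGLift prod.fst prod.snd
  inv := prod.lift (prodGFst A B) (prodGSnd A B)
  inv_hom_id := prodGObject_hom_ext (by simp) (by simp)

@[simp]
theorem prodGIso_hom_fst (A B : GObject Gr) : (prodGIso A B).hom ≫ prodGFst A B = prod.fst :=
  prodGLift_fst _ _

@[simp]
theorem prodGIso_hom_snd (A B : GObject Gr) : (prodGIso A B).hom ≫ prodGSnd A B = prod.snd :=
  prodGLift_snd _ _

@[simp]
theorem prodGIso_inv_snd (A B : GObject Gr) : (prodGIso A B).inv ≫ prod.snd = prodGSnd A B :=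
  prod.lift_snd _ _

def actHom (A : GObject Gr) : prodGObject Gr (selfAction Gr) ((trivAction Gr).obj A.A) ⟶ A where
  f := act A
  h := by
    change prod.map (𝟙 Gr.G) (act A) ≫ act A = prod.lift (prod.map (𝟙 Gr.G) prod.fst ≫ Gr.m)
      (prod.map (𝟙 Gr.G) prod.snd ≫ prod.snd) ≫ act A
    have hsnd : prod.lift (prod.snd ≫ prod.fst) (prod.snd ≫ prod.snd) =
        (prod.snd : Gr.G ⨯ (Gr.G ⨯ A.A) ⟶ _) := by
      rw [← prod.comp_lift, prod.lift_fst_snd, Category.comp_id]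
    convert (act_assoc_elt A prod.fst (prod.snd ≫ prod.fst) (prod.snd ≫ prod.snd)).symm using 3
    · apply prod.hom_ext <;> simp [hsnd]
    · congr 1
      apply prod.hom_ext <;> simp
    · simp

theorem isIso_lift_fst_act (A : GObject Gr) :
    IsIso (prod.lift prod.fst (act A) : Gr.G ⨯ A.A ⟶ Gr.G ⨯ A.A) := by
  refine ⟨prod.lift prod.fst (prod.lift (prod.fst ≫ Gr.i) prod.snd ≫ act A), ?_, ?_⟩
  · apply prod.hom_ext
    · simp
    · simp only [Category.assoc, prod.lift_snd]
      calc prod.lift prod.fst (act A) ≫ prod.lift (prod.fst ≫ Gr.i) prod.snd ≫ act A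
          = prod.lift (prod.fst ≫ Gr.i) (prod.lift prod.fst prod.snd ≫ act A) ≫ act A := by
            rw [prod.lift_fst_snd, Category.id_comp, prod.comp_lift_assoc, prod.lift_fst_assoc,
              prod.lift_snd]
        _ = prod.lift (prod.lift (prod.fst ≫ Gr.i) prod.fst ≫ Gr.m) prod.snd ≫ act A :=
            (act_assoc_elt A _ _ _).symm
        _ = prod.snd := by rw [inv_mul_elt, act_one_elt]
        _ = 𝟙 _ ≫ prod.snd := (Category.id_comp _).symm
  · apply prod.hom_ext
    · simp
    · simp only [Category.assoc, prod.lift_snd]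
      calc prod.lift prod.fst (prod.lift (prod.fst ≫ Gr.i) prod.snd ≫ act A) ≫ act A
          = prod.lift (prod.lift prod.fst (prod.fst ≫ Gr.i) ≫ Gr.m) prod.snd ≫ act A :=
            (act_assoc_elt A _ _ _).symm
        _ = prod.snd := by rw [mul_inv_elt, act_one_elt]
        _ = 𝟙 _ ≫ prod.snd := (Category.id_comp _).symm

def freeTerminalIso : (actionMonad Gr).free.obj (⊤_ C) ≅ selfAction Gr :=
  Monad.Algebra.isoMk (prod.rightUnitor Gr.G) (by
    change prod.map (𝟙 Gr.G) prod.fst ≫ Gr.m =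
      ((prod.associator Gr.G Gr.G (⊤_ C)).inv ≫ prod.map Gr.m (𝟙 _)) ≫ prod.fst
    simp only [prod.associator_inv, Category.assoc, prod.map_fst, prod.lift_fst_assoc]
    congr 1
    apply prod.hom_ext <;> simp)

/-- `Σ_G (G, m) ≅ Σ_G (free 1) ≅ 1`, since `Σ_G ∘ free` is left adjoint to `forget ∘ G* = 𝟭`. -/
def isTerminalObjSelfAction {S : GObject Gr ⥤ C} (sadj : S ⊣ trivAction Gr) :
    IsTerminal (S.obj (selfAction Gr)) :=
  let forgetTriv : trivAction Gr ⋙ (actionMonad Gr).forget ≅ 𝟭 C :=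
    NatIso.ofComponents (fun _ => Iso.refl _)
      (fun f => (Category.comp_id _).trans (Category.id_comp f).symm)
  let freeS : (actionMonad Gr).free ⋙ S ≅ 𝟭 C :=
    ((actionMonad Gr).adj.comp sadj).ofNatIsoRight forgetTriv |>.leftAdjointUniq Adjunction.id
  IsTerminal.ofIso terminalIsTerminal ((freeS.app _).symm ≪≫ S.mapIso freeTerminalIso)

def shearHom (A : GObject Gr) :
    prodGObject Gr (selfAction Gr) ((trivAction Gr).obj A.A) ⟶ prodGObject Gr (selfAction Gr) A :=
  prodGLift (prodGFst _ _) (actHom A)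

instance isIso_shearHom (A : GObject Gr) : IsIso (shearHom A) :=
  have : IsIso ((actionMonad Gr).forget.map (shearHom A)) := isIso_lift_fst_act A
  isIso_of_reflects_iso _ (actionMonad Gr).forget

@[simp]
theorem inv_shearHom_actHom (A : GObject Gr) :
    inv (shearHom A) ≫ actHom A = prodGSnd _ _ := by
  rw [IsIso.inv_comp_eq, shearHom, prodGLift_snd]

def torsorHom (A : GObject Gr) :
    prodGObject Gr (selfAction Gr) ((trivAction Gr).obj A.A) ⟶
      prodGObject Gr A ((trivAction Gr).obj A.A) :=
  prodGLift (actHom A) (prodGSnd _ _)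

section Torsor

variable {S : GObject Gr ⥤ C} (sadj : S ⊣ trivAction Gr) {L : C ⥤ GObject Gr}
  {R : GObject Gr ⥤ C} (adj : L ⊣ R) (e : L ⋙ S ≅ 𝟭 C) (hL : IsFrobenius adj)

def frobeniusShear : L.obj (R.obj (selfAction Gr)) ⟶
    prodGObject Gr (selfAction Gr) ((trivAction Gr).obj (L.obj (⊤_ C)).A) :=
  (frobeniusIso adj hL _).hom ≫ (prodGIso _ _).hom ≫ inv (shearHom _)

instance isIso_frobeniusShear : IsIso (frobeniusShear adj hL) := by
  unfold frobeniusShear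
  infer_instance

def selfActionComparison : R.obj (selfAction Gr) ⟶ (L.obj (⊤_ C)).A :=
  e.inv.app _ ≫ S.map (frobeniusShear adj hL ≫ prodGSnd _ _) ≫ sadj.counit.app _

theorem isIso_selfActionComparison (hS : IsFrobenius sadj) :
    IsIso (selfActionComparison sadj adj e hL) := by
  have := isIso_map_snd_comp_counit sadj hS (isTerminalObjSelfAction sadj) (L.obj (⊤_ C)).A
  have hsnd : frobeniusShear adj hL ≫ prodGSnd _ _ =
      (frobeniusShear adj hL ≫ (prodGIso _ _).inv) ≫ prod.snd := by
    simp
  rw [selfActionComparison, hsnd, S.map_comp_assoc]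
  infer_instance

theorem frobeniusShear_torsorHom :
    frobeniusShear adj hL ≫ torsorHom _ =
      prod.lift (L.map (terminal.from _)) (transposeOver sadj e _) ≫ (prodGIso _ _).hom ≫
        prodGHom (𝟙 _) ((trivAction Gr).map (selfActionComparison sadj adj e hL)) := by
  apply prodGObject_hom_ext
  · simp [frobeniusShear, torsorHom]
  · simp only [torsorHom, prodGLift_snd, Category.assoc, prodGHom_snd]
    rw [← Category.assoc (prodGIso _ _).hom, prodGIso_hom_snd, prod.lift_snd_assoc,
      selfActionComparison, transposeOver_comp_map]

end Torsor

theorem isIso_torsorHom {S : GObject Gr ⥤ C} (sadj : S ⊣ trivAction Gr) (hS : IsFrobenius sadj)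
    {L : C ⥤ GObject Gr} {R : GObject Gr ⥤ C} (adj : L ⊣ R) (hL : IsFrobenius adj)
    (e : L ⋙ S ≅ 𝟭 C) : IsIso (torsorHom (L.obj (⊤_ C))) := by
  have := isIso_selfActionComparison sadj adj e hL hS
  have := isIso_lift_map_from_transposeOver sadj adj e hS hL (R.obj (selfAction Gr))
  have hfactor := frobeniusShear_torsorHom sadj adj e hL
  rw [← IsIso.eq_inv_comp] at hfactor
  rw [hfactor]
  infer_instance

end InternalGroup

end PrincipalBundles

open PrincipalBundles PrincipalBundles.InternalGroup
open CategoryTheory CategoryTheory.Limits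

/-- If `Σ_G ⊣ G*` satisfies Frobenius reciprocity and `L ⊣ R : C ⇄ [G, C]` is
an adjunction over `C` satisfying Frobenius reciprocity, with `(P, p) = L 1`, then
`R (G, m) ≅ P` and `(p, π₂) : G ⨯ P ⟶ P ⨯ P` is an isomorphism. -/
theorem statement8 {C : Type u} [Category.{v} C] [HasFiniteLimits C] (Gr : InternalGroup C)
    (SG : GObject Gr ⥤ C) (SGadj : SG ⊣ trivAction Gr) (hSG : IsFrobenius SGadj)
    (L : C ⥤ GObject Gr) (R : GObject Gr ⥤ C) (adj : L ⊣ R) (hover : L ⋙ SG = 𝟭 C)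
    (hfrob : IsFrobenius adj) :
    Nonempty (R.obj (selfAction Gr) ≅ (L.obj (⊤_ C)).A) ∧
    IsIso (prod.lift (act (L.obj (⊤_ C))) prod.snd) := by
  have := isIso_selfActionComparison SGadj adj (eqToIso hover) hfrob hSG
  have := isIso_torsorHom SGadj hSG adj hfrob (eqToIso hover)
  -- the underlying morphism of `torsorHom P` is `(p, π₂)` by definition
  exact ⟨⟨asIso (selfActionComparison SGadj adj (eqToIso hover) hfrob)⟩,
    inferInstanceAs (IsIso ((actionMonad Gr).forget.map (torsorHom _)))⟩
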